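/- arXiv:2512.01809 — 2 statements merged into one kernel-verified Lean document; each statement's English description precedes it below -/
import Mathlib

section
/- In the isotropic linear model a = Θ* o + η with Σ_o = I, Σ_η = η² I, Σ_z = I, Θ* = diag(s_i), and w = c₁ a + c₂ z, the solution of the ridge problem with penalty λ on B (minimizing E‖B o + C w − a‖² + λ‖B‖_F²) is B = diag(c₂² s_i / (λ c₁² s_i² + (1+λ)(c₁² η² + c₂²))) and C = diag((1/c₁)(1 − (1+λ)c₂² / (λ c₁² s_i² + (1+λ)(c₁² η² + c₂²)))). -/
open Matrix

/-!
With `Θ* = diag s`, every population moment in the normal equations is a diagonal matrix, so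
for each entry `(i, j)` the pair `(B i j, C i j)` solves the symmetric `2 × 2` system with
matrix `[[1 + λ, c₁ s_j], [c₁ s_j, c₁²(s_j² + η²) + c₂²]]`, whose determinant is the
denominator `D_j` of the theorem. Cramer's rule then gives zero off the diagonal and the
stated values on it.
-/

section

variable {K : Type*} [Field K]

theorem eq_div_det_of_symm_system {p q r u v b c : K} (hdet : p * r - q ^ 2 ≠ 0)
    (h₁ : b * p + c * q = u) (h₂ : b * q + c * r = v) :
    b = (u * r - v * q) / (p * r - q ^ 2) ∧ c = (v * p - u * q) / (p * r - q ^ 2) := by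
  constructor <;> rw [eq_div_iff hdet]
  · linear_combination r * h₁ - q * h₂
  · linear_combination p * h₂ - q * h₁

variable {n : Type*} [Fintype n] [DecidableEq n]

theorem Matrix.eq_diagonal_of_mul_diagonal_symm_system {p q r u v : n → K}
    {B C : Matrix n n K} (hdet : ∀ j, p j * r j - q j ^ 2 ≠ 0)
    (h₁ : B * diagonal p + C * diagonal q = diagonal u)
    (h₂ : B * diagonal q + C * diagonal r = diagonal v) :
    B = diagonal (fun j => (u j * r j - v j * q j) / (p j * r j - q j ^ 2)) ∧
    C = diagonal (fun j => (v j * p j - u j * q j) / (p j * r j - q j ^ 2)) := by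
  have entry (i j : n) :=
    eq_div_det_of_symm_system (b := B i j) (c := C i j) (hdet j)
      (by simpa only [add_apply, mul_diagonal] using congrFun (congrFun h₁ i) j)
      (by simpa only [add_apply, mul_diagonal] using congrFun (congrFun h₂ i) j)
  constructor <;> ext i j <;> rcases eq_or_ne i j with rfl | hij
  all_goals simp_all [diagonal_apply_ne]

theorem Matrix.diagonal_mul_transpose_add_smul_one {R : Type*} [CommRing R] (s : n → R) (a : R) :
    diagonal s * (diagonal s)ᵀ + a • 1 = diagonal fun j => s j ^ 2 + a := by
  rw [diagonal_transpose, diagonal_mul_diagonal, smul_one_eq_diagonal, diagonal_add]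
  simp only [sq]

end

theorem ridge_on_B_isotropic_solution_general {d : ℕ}
    (s : Fin d → ℝ)
    (c₁ c₂ η lam : ℝ) (hc₁ : c₁ ≠ 0)
    (hden : ∀ i, lam * c₁ ^ 2 * s i ^ 2 + (1 + lam) * (c₁ ^ 2 * η ^ 2 + c₂ ^ 2) ≠ 0)
    (S11 S12 S21 S22 Sa1 Sa2 : Matrix (Fin d) (Fin d) ℝ)
    (hS11 : S11 = 1)
    (hS12 : S12 = c₁ • (Matrix.diagonal s)ᵀ)
    (hS21 : S21 = S12ᵀ)
    (hS22 : S22 = c₁ ^ 2 • (Matrix.diagonal s * (Matrix.diagonal s)ᵀ + η ^ 2 • 1)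
      + c₂ ^ 2 • 1)
    (hSa1 : Sa1 = Matrix.diagonal s)
    (hSa2 : Sa2 = c₁ • (Matrix.diagonal s * (Matrix.diagonal s)ᵀ + η ^ 2 • 1))
    (B C : Matrix (Fin d) (Fin d) ℝ)
    (h1 : B * (S11 + lam • 1) + C * S21 = Sa1)
    (h2 : B * S12 + C * S22 = Sa2) :
    B = Matrix.diagonal (fun i =>
        c₂ ^ 2 * s i / (lam * c₁ ^ 2 * s i ^ 2 + (1 + lam) * (c₁ ^ 2 * η ^ 2 + c₂ ^ 2))) ∧
    C = Matrix.diagonal (fun i =>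
        (1 / c₁) * (1 - (1 + lam) * c₂ ^ 2 /
          (lam * c₁ ^ 2 * s i ^ 2 + (1 + lam) * (c₁ ^ 2 * η ^ 2 + c₂ ^ 2)))) := by
  have hP : (1 : Matrix (Fin d) (Fin d) ℝ) + lam • 1 = diagonal fun _ => 1 + lam := by
    rw [smul_one_eq_diagonal, ← diagonal_one, diagonal_add]
  have hQ : c₁ • (diagonal s)ᵀ = diagonal fun j => c₁ * s j := by
    rw [diagonal_transpose, ← diagonal_smul]; rfl
  have hR : c₁ ^ 2 • (diagonal s * (diagonal s)ᵀ + η ^ 2 • 1) + c₂ ^ 2 • 1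
      = diagonal fun j => c₁ ^ 2 * (s j ^ 2 + η ^ 2) + c₂ ^ 2 := by
    rw [diagonal_mul_transpose_add_smul_one, ← diagonal_smul, smul_one_eq_diagonal, diagonal_add]; rfl
  have hV : c₁ • (diagonal s * (diagonal s)ᵀ + η ^ 2 • 1)
      = diagonal fun j => c₁ * (s j ^ 2 + η ^ 2) := by
    rw [diagonal_mul_transpose_add_smul_one, ← diagonal_smul]; rfl
  subst hS11 hS12 hS21 hS22 hSa1 hSa2
  rw [hP, hQ, diagonal_transpose] at h1
  rw [hQ, hR, hV] at h2
  have hdet (j : Fin d) :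
      (1 + lam) * (c₁ ^ 2 * (s j ^ 2 + η ^ 2) + c₂ ^ 2) - (c₁ * s j) ^ 2
      = lam * c₁ ^ 2 * s j ^ 2 + (1 + lam) * (c₁ ^ 2 * η ^ 2 + c₂ ^ 2) := by
    ring
  obtain ⟨rfl, rfl⟩ := eq_diagonal_of_mul_diagonal_symm_system (fun j => hdet j ▸ hden j) h1 h2
  constructor <;> congr 1 <;> funext j <;> rw [hdet]
  · ring
  · rw [one_sub_div (hden j)]
    field_simp
    ring

/-- Isotropic ridge-on-`B` solution: under `Σ_o = I`, `Σ_η = η² I`, `Σ_z = I`,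
`Θ* = diag(s_i)`, `w = c₁ a + c₂ z`, the solution of the normal equations of the ridge
problem with penalty `λ` on `B` is
`B = diag(c₂² s_i / D_i)` and `C = diag((1/c₁)(1 − (1+λ)c₂²/D_i))`,
where `D_i = λ c₁² s_i² + (1+λ)(c₁² η² + c₂²)`. -/
theorem ridge_on_B_isotropic_solution {d : ℕ}
    (s : Fin d → ℝ) (hs : ∀ i, s i ≠ 0)
    (c₁ c₂ η lam : ℝ) (hc₁ : c₁ ≠ 0) (hlam : 0 ≤ lam)
    (hden : ∀ i, lam * c₁ ^ 2 * s i ^ 2 + (1 + lam) * (c₁ ^ 2 * η ^ 2 + c₂ ^ 2) ≠ 0)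
    (S11 S12 S21 S22 Sa1 Sa2 : Matrix (Fin d) (Fin d) ℝ)
    (hS11 : S11 = 1)
    (hS12 : S12 = c₁ • (Matrix.diagonal s)ᵀ)
    (hS21 : S21 = S12ᵀ)
    (hS22 : S22 = c₁ ^ 2 • (Matrix.diagonal s * (Matrix.diagonal s)ᵀ + η ^ 2 • 1)
      + c₂ ^ 2 • 1)
    (hSa1 : Sa1 = Matrix.diagonal s)
    (hSa2 : Sa2 = c₁ • (Matrix.diagonal s * (Matrix.diagonal s)ᵀ + η ^ 2 • 1))
    (B C : Matrix (Fin d) (Fin d) ℝ)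
    (h1 : B * (S11 + lam • 1) + C * S21 = Sa1)
    (h2 : B * S12 + C * S22 = Sa2) :
    B = Matrix.diagonal (fun i =>
        c₂ ^ 2 * s i / (lam * c₁ ^ 2 * s i ^ 2 + (1 + lam) * (c₁ ^ 2 * η ^ 2 + c₂ ^ 2))) ∧
    C = Matrix.diagonal (fun i =>
        (1 / c₁) * (1 - (1 + lam) * c₂ ^ 2 /
          (lam * c₁ ^ 2 * s i ^ 2 + (1 + lam) * (c₁ ^ 2 * η ^ 2 + c₂ ^ 2)))) :=
  ridge_on_B_isotropic_solution_general s c₁ c₂ η lam hc₁ hden S11 S12 S21 S22 Sa1 Sa2 hS11 hS12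
    hS21 hS22 hSa1 hSa2 B C h1 h2
end

section
/- In the isotropic linear model with ridge penalty λ on C (minimizing E‖B o + C w − a‖² + λ‖C‖_F²), the solution is B = diag((c₂² + λ) s_i / (c₁² η² + c₂² + λ)) and C = (c₁ η² / (c₁² η² + c₂² + λ)) I. -/
/-!
Substituting `B = D - C (c₁ D)` from the first normal equation into the second, the
`C D²` terms cancel, leaving `(c₁² η² + c₂² + λ) C = c₁ η² I`. So `C` is scalar, and then
`B = (1 - c₁ κ) D` with `κ = c₁ η² / (c₁² η² + c₂² + λ)`. Since `D` only ever multiplies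
from the right, no commutativity is needed and the computation holds in any algebra.
-/

open Matrix

section NormalEquations

variable {K A : Type*} [Field K] [Ring A] [Algebra K A]

theorem ridge_normal_equations_smul_eq (D B C : A) (c₁ c₂ η lam : K)
    (h₁ : B + C * (c₁ • D) = D)
    (h₂ : B * (c₁ • D) + C * (c₁ ^ 2 • (D ^ 2 + η ^ 2 • 1) + c₂ ^ 2 • 1 + lam • 1)
      = c₁ • (D ^ 2 + η ^ 2 • 1)) :
    (c₁ ^ 2 * η ^ 2 + c₂ ^ 2 + lam) • C = (c₁ * η ^ 2) • 1 := by
  obtain rfl : B = D - C * (c₁ • D) := eq_sub_of_add_eq h₁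
  simp only [sub_mul, mul_add, mul_assoc, smul_mul_assoc, mul_smul_comm, smul_add, pow_two,
    mul_one, smul_smul] at h₂
  linear_combination (norm := module) h₂

theorem ridge_normal_equations_solution (D B C : A) (c₁ c₂ η lam : K)
    (hden : c₁ ^ 2 * η ^ 2 + c₂ ^ 2 + lam ≠ 0)
    (h₁ : B + C * (c₁ • D) = D)
    (h₂ : B * (c₁ • D) + C * (c₁ ^ 2 • (D ^ 2 + η ^ 2 • 1) + c₂ ^ 2 • 1 + lam • 1)
      = c₁ • (D ^ 2 + η ^ 2 • 1)) :
    B = ((c₂ ^ 2 + lam) / (c₁ ^ 2 * η ^ 2 + c₂ ^ 2 + lam)) • D ∧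
    C = (c₁ * η ^ 2 / (c₁ ^ 2 * η ^ 2 + c₂ ^ 2 + lam)) • 1 := by
  have hC : C = (c₁ * η ^ 2 / (c₁ ^ 2 * η ^ 2 + c₂ ^ 2 + lam)) • 1 := by
    rw [div_eq_inv_mul, mul_smul, ← ridge_normal_equations_smul_eq D B C c₁ c₂ η lam h₁ h₂,
      inv_smul_smul₀ hden]
  have hcoeff : (c₂ ^ 2 + lam) / (c₁ ^ 2 * η ^ 2 + c₂ ^ 2 + lam)
      = 1 - c₁ * η ^ 2 / (c₁ ^ 2 * η ^ 2 + c₂ ^ 2 + lam) * c₁ := by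
    field_simp
    ring
  refine ⟨?_, hC⟩
  rw [eq_sub_of_add_eq h₁, hC, smul_mul_assoc, one_mul, smul_smul, hcoeff, sub_smul, one_smul]

end NormalEquations

theorem ridge_on_C_isotropic_solution_general {d : ℕ}
    (s : Fin d → ℝ)
    (c₁ c₂ η lam : ℝ)
    (hden : c₁ ^ 2 * η ^ 2 + c₂ ^ 2 + lam ≠ 0)
    (S11 S12 S21 S22 Sa1 Sa2 : Matrix (Fin d) (Fin d) ℝ)
    (hS11 : S11 = 1)
    (hS12 : S12 = c₁ • (Matrix.diagonal s)ᵀ)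
    (hS21 : S21 = c₁ • Matrix.diagonal s)
    (hS22 : S22 = c₁ ^ 2 • (Matrix.diagonal s ^ 2 + η ^ 2 • 1) + c₂ ^ 2 • 1)
    (hSa1 : Sa1 = Matrix.diagonal s)
    (hSa2 : Sa2 = c₁ • (Matrix.diagonal s ^ 2 + η ^ 2 • 1))
    (B C : Matrix (Fin d) (Fin d) ℝ)
    (h1 : B * S11 + C * S21 = Sa1)
    (h2 : B * S12 + C * (S22 + lam • 1) = Sa2) :
    B = Matrix.diagonal (fun i =>
        (c₂ ^ 2 + lam) * s i / (c₁ ^ 2 * η ^ 2 + c₂ ^ 2 + lam)) ∧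
    C = (c₁ * η ^ 2 / (c₁ ^ 2 * η ^ 2 + c₂ ^ 2 + lam)) • (1 : Matrix (Fin d) (Fin d) ℝ) := by
  subst hS11 hS12 hS21 hS22 hSa1 hSa2
  rw [mul_one] at h1
  rw [diagonal_transpose] at h2
  obtain ⟨hB, hC⟩ := ridge_normal_equations_solution _ B C c₁ c₂ η lam hden h1 h2
  refine ⟨hB.trans ?_, hC⟩
  rw [← diagonal_smul]
  congr 1
  funext i
  exact (mul_div_right_comm _ _ _).symm

/-- Isotropic ridge-on-`C` solution: with penalty `λ` on `C`, the solution of the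
normal equations is `B = diag((c₂² + λ) s_i / (c₁² η² + c₂² + λ))` and
`C = (c₁ η² / (c₁² η² + c₂² + λ)) I`. -/
theorem ridge_on_C_isotropic_solution {d : ℕ}
    (s : Fin d → ℝ) (hs : ∀ i, s i ≠ 0)
    (c₁ c₂ η lam : ℝ) (hc₁ : c₁ ≠ 0) (hlam : 0 ≤ lam)
    (hden : c₁ ^ 2 * η ^ 2 + c₂ ^ 2 + lam ≠ 0)
    (S11 S12 S21 S22 Sa1 Sa2 : Matrix (Fin d) (Fin d) ℝ)
    (hS11 : S11 = 1)
    (hS12 : S12 = c₁ • (Matrix.diagonal s)ᵀ)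
    (hS21 : S21 = c₁ • Matrix.diagonal s)
    (hS22 : S22 = c₁ ^ 2 • (Matrix.diagonal s ^ 2 + η ^ 2 • 1) + c₂ ^ 2 • 1)
    (hSa1 : Sa1 = Matrix.diagonal s)
    (hSa2 : Sa2 = c₁ • (Matrix.diagonal s ^ 2 + η ^ 2 • 1))
    (B C : Matrix (Fin d) (Fin d) ℝ)
    (h1 : B * S11 + C * S21 = Sa1)
    (h2 : B * S12 + C * (S22 + lam • 1) = Sa2) :
    B = Matrix.diagonal (fun i =>
        (c₂ ^ 2 + lam) * s i / (c₁ ^ 2 * η ^ 2 + c₂ ^ 2 + lam)) ∧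
    C = (c₁ * η ^ 2 / (c₁ ^ 2 * η ^ 2 + c₂ ^ 2 + lam)) • (1 : Matrix (Fin d) (Fin d) ℝ) :=
  ridge_on_C_isotropic_solution_general s c₁ c₂ η lam hden S11 S12 S21 S22 Sa1 Sa2 hS11 hS12 hS21
    hS22 hSa1 hSa2 B C h1 h2
end
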